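/- If a < 0 < c and a + c > 0, then 𝔠(−a, c) + 2√2 · a · e^{a²/4} / (a² − c²) = 𝔠(a, c). -/

import Mathlib

open MeasureTheory Real Filter Topology

noncomputable section

/-- Transition kernel of Brownian motion killed at hitting zero (vanishing off `(0,∞)²`). -/
def gker (t x y : ℝ) : ℝ :=
  if 0 < x ∧ 0 < y then
    (Real.sqrt (2 * Real.pi * t))⁻¹ *
      (Real.exp (-(x - y) ^ 2 / (2 * t)) - Real.exp (-(x + y) ^ 2 / (2 * t)))
  else 0

/-- Normalizing constant `𝔠(a,c)`. -/
def cAC (a c : ℝ) : ℝ :=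
  ∫ p : ℝ × ℝ in Set.Ioi (0 : ℝ) ×ˢ Set.Ioi (0 : ℝ),
    Real.exp (-(c * p.1 + a * p.2) / Real.sqrt 2) * gker 1 p.1 p.2

open Set

/-!
Only the odd part of the weight in `y` survives in `𝔠(a, c) - 𝔠(-a, c)`: with `α = c/√2` and
`β = a/√2` it is `-2 e^{-αx} sinh (βy)`. By the method of images the killed kernel acts on odd
functions as the free Gaussian kernel, so the Gaussian moment generating function gives
`∫₀^∞ sinh (βy) g₁(x, y) dy = e^{β²/2} sinh (βx)`. What remains is the Laplace transform
`∫₀^∞ e^{-αx} sinh (βx) dx = β / (α² - β²)`, finite since `|β| < α`.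
-/

section ProdIntegrable

variable {α β E : Type*} [MeasurableSpace α] [MeasurableSpace β] [NormedAddCommGroup E]
  {μ : Measure α} {ν : Measure β} [SFinite ν]

theorem integrable_prod_of_norm_le {f : α × β → E} (hf : AEStronglyMeasurable f (μ.prod ν))
    {G : α → β → ℝ} {H : α → ℝ} (hG : ∀ᵐ x ∂μ, Integrable (G x) ν)
    (hfG : ∀ᵐ x ∂μ, ∀ᵐ y ∂ν, ‖f (x, y)‖ ≤ G x y) (hGH : ∀ᵐ x ∂μ, ∫ y, G x y ∂ν ≤ H x)
    (hH : Integrable H μ) : Integrable f (μ.prod ν) := by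
  have hsec : ∀ᵐ x ∂μ, Integrable (fun y => f (x, y)) ν := by
    filter_upwards [hG, hfG, hf.prodMk_left] with x hGx hfGx hfx
    exact hGx.mono' hfx hfGx
  refine (integrable_prod_iff hf).2 ⟨hsec, hH.mono' hf.norm.integral_prod_right' ?_⟩
  filter_upwards [hG, hfG, hGH, hsec] with x hGx hfGx hGHx hsecx
  rw [Real.norm_of_nonneg (integral_nonneg fun y => norm_nonneg _)]
  exact (integral_mono_ae hsecx.norm hGx hfGx).trans hGHx

end ProdIntegrable

theorem integral_Ioi_add_integral_Ioi_comp_neg {E : Type*} [NormedAddCommGroup E]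
    [NormedSpace ℝ E] {f : ℝ → E} (hf : Integrable f) :
    (∫ y in Ioi 0, f y) + ∫ y in Ioi 0, f (-y) = ∫ y, f y := by
  rw [integral_comp_neg_Ioi, neg_zero, add_comm,
    intervalIntegral.integral_Iic_add_Ioi hf.integrableOn hf.integrableOn]

theorem integral_exp_neg_mul_mul_sinh_Ioi {α β : ℝ} (h₁ : 0 < α + β) (h₂ : 0 < α - β) :
    ∫ x in Ioi 0, exp (-α * x) * sinh (β * x) = β / (α ^ 2 - β ^ 2) := by
  have hexp : ∀ x, exp (-α * x) * sinh (β * x)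
      = (exp ((β - α) * x) - exp ((-β - α) * x)) / 2 := fun x => by
    rw [sinh_eq, mul_div_assoc', mul_sub, ← exp_add, ← exp_add]; ring_nf
  have hβα : β - α < 0 := by linarith
  have hβα' : -β - α < 0 := by linarith
  simp_rw [hexp]
  rw [integral_div, integral_sub (integrableOn_exp_mul_Ioi hβα 0)
    (integrableOn_exp_mul_Ioi hβα' 0), integral_exp_mul_Ioi hβα, integral_exp_mul_Ioi hβα']
  have hαβ : α ^ 2 - β ^ 2 ≠ 0 := by nlinarith
  rw [mul_zero, exp_zero, mul_zero, exp_zero]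
  field_simp [hβα.ne, hβα'.ne]
  ring

theorem exp_mul_mul_exp_neg_sq_sub (l s y : ℝ) :
    exp (l * y) * exp (-(s - y) ^ 2 / 2)
      = exp (l * s + l ^ 2 / 2) * exp (-(1 / 2) * (y - (s + l)) ^ 2) := by
  rw [← exp_add, ← exp_add]; congr 1; ring

theorem integrable_exp_mul_mul_exp_neg_sq_sub (l s : ℝ) :
    Integrable fun y => exp (l * y) * exp (-(s - y) ^ 2 / 2) := by
  simp_rw [exp_mul_mul_exp_neg_sq_sub]
  exact ((integrable_exp_neg_mul_sq (by norm_num)).comp_sub_right (s + l)).const_mul _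

theorem integral_exp_mul_mul_exp_neg_sq_sub (l s : ℝ) :
    ∫ y, exp (l * y) * exp (-(s - y) ^ 2 / 2) = √(2 * π) * exp (l * s + l ^ 2 / 2) := by
  simp_rw [exp_mul_mul_exp_neg_sq_sub, integral_const_mul]
  rw [integral_sub_right_eq_self (fun y => exp (-(1 / 2) * y ^ 2)) (s + l), integral_gaussian]
  norm_num [Real.sqrt_div']
  ring

theorem integrable_sinh_mul_exp_neg_sq_sub (β s : ℝ) :
    Integrable fun y => sinh (β * y) * exp (-(s - y) ^ 2 / 2) := by
  simp_rw [sinh_eq, div_mul_eq_mul_div, sub_mul, ← neg_mul]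
  exact ((integrable_exp_mul_mul_exp_neg_sq_sub β s).sub
    (integrable_exp_mul_mul_exp_neg_sq_sub (-β) s)).div_const 2

theorem integral_sinh_mul_exp_neg_sq_sub (β s : ℝ) :
    ∫ y, sinh (β * y) * exp (-(s - y) ^ 2 / 2) = √(2 * π) * exp (β ^ 2 / 2) * sinh (β * s) := by
  simp_rw [sinh_eq, div_mul_eq_mul_div, sub_mul, ← neg_mul]
  rw [integral_div, integral_sub (integrable_exp_mul_mul_exp_neg_sq_sub β s)
    (integrable_exp_mul_mul_exp_neg_sq_sub (-β) s), integral_exp_mul_mul_exp_neg_sq_sub,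
    integral_exp_mul_mul_exp_neg_sq_sub, exp_add, exp_add]
  ring_nf

theorem gker_nonneg {t : ℝ} (ht : 0 ≤ t) (x y : ℝ) : 0 ≤ gker t x y := by
  unfold gker
  split_ifs with h
  · refine mul_nonneg (inv_nonneg.2 (sqrt_nonneg _)) (sub_nonneg.2 (exp_le_exp.2 ?_))
    exact div_le_div_of_nonneg_right (by nlinarith [mul_pos h.1 h.2]) (by positivity)
  · exact le_rfl

theorem gker_le (t x y : ℝ) :
    gker t x y ≤ (√(2 * π * t))⁻¹ * exp (-(x - y) ^ 2 / (2 * t)) := by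
  unfold gker
  split_ifs
  · exact mul_le_mul_of_nonneg_left (sub_le_self _ (exp_pos _).le) (by positivity)
  · positivity

theorem gker_one_of_pos {x y : ℝ} (hx : 0 < x) (hy : 0 < y) :
    gker 1 x y = (√(2 * π))⁻¹ * (exp (-(x - y) ^ 2 / 2) - exp (-(x + y) ^ 2 / 2)) := by
  simp [gker, hx, hy]

theorem measurable_gker (t : ℝ) : Measurable fun p : ℝ × ℝ => gker t p.1 p.2 :=
  Measurable.ite (measurableSet_Ioi.prod measurableSet_Ioi) (by fun_prop) measurable_const

theorem integral_sinh_mul_gker_one {x : ℝ} (hx : 0 < x) (β : ℝ) :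
    ∫ y in Ioi 0, sinh (β * y) * gker 1 x y = exp (β ^ 2 / 2) * sinh (β * x) := by
  set h : ℝ → ℝ := fun y => sinh (β * y) * exp (-(x - y) ^ 2 / 2)
  have hh : Integrable h := integrable_sinh_mul_exp_neg_sq_sub β x
  have himages : ∀ y ∈ Ioi (0 : ℝ), sinh (β * y) * gker 1 x y = (√(2 * π))⁻¹ * (h y + h (-y)) :=
    fun y hy => by
      simp only [h, gker_one_of_pos hx hy, mul_neg, sinh_neg, sub_neg_eq_add]
      ring
  rw [setIntegral_congr_fun measurableSet_Ioi himages, integral_const_mul,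
    integral_add hh.integrableOn hh.comp_neg.integrableOn,
    integral_Ioi_add_integral_Ioi_comp_neg hh, integral_sinh_mul_exp_neg_sq_sub,
    mul_assoc, inv_mul_cancel_left₀ (by positivity)]

def gkerLaplace (α β : ℝ) : ℝ :=
  ∫ p : ℝ × ℝ in Ioi 0 ×ˢ Ioi 0, exp (-(α * p.1 + β * p.2)) * gker 1 p.1 p.2

theorem cAC_eq_gkerLaplace (a c : ℝ) : cAC a c = gkerLaplace (c / √2) (a / √2) := by
  simp only [cAC, gkerLaplace, neg_div, add_div, mul_div_right_comm]

theorem integrableOn_exp_mul_gker_one {α β : ℝ} (h : 0 < α + β) :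
    IntegrableOn (fun p : ℝ × ℝ => exp (-(α * p.1 + β * p.2)) * gker 1 p.1 p.2)
      (Ioi 0 ×ˢ Ioi 0) := by
  set G : ℝ → ℝ → ℝ := fun x y =>
    (√(2 * π))⁻¹ * exp (-(α * x)) * (exp (-β * y) * exp (-(x - y) ^ 2 / 2))
  have hG : ∀ x, Integrable (G x) := fun x =>
    (integrable_exp_mul_mul_exp_neg_sq_sub (-β) x).const_mul _
  have hGint : ∀ x, ∫ y, G x y = exp (β ^ 2 / 2) * exp (-(α + β) * x) := fun x => by
    rw [integral_const_mul, integral_exp_mul_mul_exp_neg_sq_sub, mul_comm _ (exp _),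
      mul_assoc, inv_mul_cancel_left₀ (by positivity), ← exp_add, ← exp_add]
    ring_nf
  rw [IntegrableOn, Measure.volume_eq_prod, ← Measure.prod_restrict]
  refine integrable_prod_of_norm_le
    (((by fun_prop : Measurable fun p : ℝ × ℝ => exp (-(α * p.1 + β * p.2))).mul
      (measurable_gker 1)).aestronglyMeasurable) (G := G)
    (Eventually.of_forall fun x => (hG x).integrableOn)
    (Eventually.of_forall fun x => Eventually.of_forall fun y => ?_)
    (Eventually.of_forall fun x => ?_)
    ((integrableOn_exp_mul_Ioi (neg_lt_zero.2 h) 0).const_mul (exp (β ^ 2 / 2)))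
  · rw [norm_of_nonneg (mul_nonneg (exp_pos _).le (gker_nonneg zero_le_one x y))]
    calc exp (-(α * x + β * y)) * gker 1 x y
        ≤ exp (-(α * x + β * y)) * ((√(2 * π * 1))⁻¹ * exp (-(x - y) ^ 2 / (2 * 1))) :=
          mul_le_mul_of_nonneg_left (gker_le 1 x y) (exp_pos _).le
      _ = G x y := by simp only [G, mul_one, neg_add, exp_add, neg_mul]; ring
  · rw [← hGint]
    exact setIntegral_le_integral (hG x) (Eventually.of_forall fun y => by positivity)

theorem gkerLaplace_sub_gkerLaplace_neg {α β : ℝ} (h₁ : 0 < α + β) (h₂ : 0 < α - β) :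
    gkerLaplace α β - gkerLaplace α (-β) = -2 * exp (β ^ 2 / 2) * (β / (α ^ 2 - β ^ 2)) := by
  have hdiff : ∀ p : ℝ × ℝ,
      exp (-(α * p.1 + β * p.2)) * gker 1 p.1 p.2 - exp (-(α * p.1 + -β * p.2)) * gker 1 p.1 p.2
        = -2 * exp (-α * p.1) * (sinh (β * p.2) * gker 1 p.1 p.2) := fun p => by
    simp only [sinh_eq, neg_add, neg_mul, neg_neg, exp_add]
    ring
  have hI₁ := integrableOn_exp_mul_gker_one h₁
  have hI₂ := integrableOn_exp_mul_gker_one (α := α) (β := -β) (by linarith)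
  have hI := (hI₁.sub hI₂).congr_fun (fun p _ => hdiff p) (measurableSet_Ioi.prod measurableSet_Ioi)
  calc gkerLaplace α β - gkerLaplace α (-β)
      = ∫ p : ℝ × ℝ in Ioi 0 ×ˢ Ioi 0, -2 * exp (-α * p.1) * (sinh (β * p.2) * gker 1 p.1 p.2) := by
        rw [gkerLaplace, gkerLaplace, ← integral_sub hI₁ hI₂]
        exact integral_congr_ae (Eventually.of_forall hdiff)
    _ = ∫ x in Ioi 0, ∫ y in Ioi 0, -2 * exp (-α * x) * (sinh (β * y) * gker 1 x y) := by
        rw [Measure.volume_eq_prod] at hI ⊢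
        exact setIntegral_prod _ hI
    _ = ∫ x in Ioi 0, -2 * exp (β ^ 2 / 2) * (exp (-α * x) * sinh (β * x)) :=
        setIntegral_congr_fun measurableSet_Ioi fun x hx => by
          rw [integral_const_mul, integral_sinh_mul_gker_one hx]
          ring
    _ = -2 * exp (β ^ 2 / 2) * (β / (α ^ 2 - β ^ 2)) := by
        rw [integral_const_mul, integral_exp_neg_mul_mul_sinh_Ioi h₁ h₂]

theorem statement14_general (a c : ℝ) (ha : a < 0) (hac : 0 < a + c) :
    cAC (-a) c + 2 * Real.sqrt 2 * a * Real.exp (a ^ 2 / 4) / (a ^ 2 - c ^ 2) = cAC a c := by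
  have hs : √2 ^ 2 = 2 := sq_sqrt zero_le_two
  have hden : a ^ 2 - c ^ 2 ≠ 0 := by nlinarith
  have hden' : c ^ 2 - a ^ 2 ≠ 0 := by nlinarith
  have key := gkerLaplace_sub_gkerLaplace_neg (α := c / √2) (β := a / √2)
    (by rw [← add_div]; exact div_pos (by linarith) (by positivity))
    (by rw [← sub_div]; exact div_pos (by linarith) (by positivity))
  rw [cAC_eq_gkerLaplace, cAC_eq_gkerLaplace, neg_div, eq_comm, ← sub_eq_iff_eq_add', key,
    div_pow, div_pow, hs, show a ^ 2 / 2 / 2 = a ^ 2 / 4 by ring]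
  field_simp
  rw [hs]
  ring

/-- Reflection identity for the normalizing constant:
`𝔠(−a,c) + 2√2·a·e^{a²/4}/(a² − c²) = 𝔠(a,c)` for `a < 0 < c` with `a + c > 0`. -/
theorem statement14 (a c : ℝ) (ha : a < 0) (hc : 0 < c) (hac : 0 < a + c) :
    cAC (-a) c + 2 * Real.sqrt 2 * a * Real.exp (a ^ 2 / 4) / (a ^ 2 - c ^ 2) = cAC a c :=
  statement14_general a c ha hac
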